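/- Let X ∈ R^{n×p}, w ∈ R^p with support S, and suppose the Gram matrix σ = XᵀX satisfies: the graph on S with edges {(i,j) : σ_{ij} ≠ 0} decomposes S into connected components S_1,…,S_m. Then the trace Lasso decomposes over the components: ‖X·Diag(w)‖_* = Σ_{k=1}^m ‖X·Diag(w_{S_k})‖_*. -/

import Mathlib

noncomputable def traceNorm {n p : ℕ} (M : Matrix (Fin n) (Fin p) ℝ) : ℝ :=
  ((Matrix.posSemidef_conjTranspose_mul_self M).1.eigenvectorUnitary.1 *
    Matrix.diagonal ((RCLike.ofReal : ℝ → ℝ) ∘ (Real.sqrt ·) ∘ (Matrix.posSemidef_conjTranspose_mul_self M).1.eigenvalues) *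
    (star (Matrix.posSemidef_conjTranspose_mul_self M).1.eigenvectorUnitary : Matrix (Fin p) (Fin p) ℝ)).trace

/-! The trace norm is `tr √(MᴴM)`. By the orthogonality hypothesis the Gram matrix of `X · Diag w`
is the sum of the Gram matrices of the `X · Diag w_{S_k}`, and these pieces multiply to zero
pairwise because the `w_{S_k}` have disjoint supports. Positive semidefinite matrices with
`A * B = 0` also have `√A * √B = 0`, so the square of `∑ₖ √Aₖ` is `∑ₖ Aₖ`; by uniqueness of the
positive square root, `√(∑ₖ Aₖ) = ∑ₖ √Aₖ`, and taking traces gives the claim. -/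

open Matrix
open scoped MatrixOrder ComplexOrder

theorem traceNorm_eq_trace_sqrt {n p : ℕ} (M : Matrix (Fin n) (Fin p) ℝ) :
    traceNorm M = (CFC.sqrt (Mᴴ * M)).trace := by
  have hM := posSemidef_conjTranspose_mul_self M
  rw [CFC.sqrt_eq_real_sqrt _ hM.nonneg, cfcₙ_eq_cfc, hM.1.cfc_eq, IsHermitian.cfc,
    Unitary.conjStarAlgAut_apply]
  rfl

namespace Matrix
variable {n 𝕜 : Type*} [Fintype n] [RCLike 𝕜]

theorem conjTranspose_mul_self_mul_conjTranspose_mul_self_eq_zero {m : Type*} [Fintype m]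
    {M N : Matrix m n 𝕜} (h : M * Nᴴ = 0) : Mᴴ * M * (Nᴴ * N) = 0 := by
  rw [Matrix.mul_assoc, ← Matrix.mul_assoc M, h, Matrix.zero_mul, Matrix.mul_zero]

variable [DecidableEq n]

theorem mul_diagonal_mul_conjTranspose_mul_diagonal_eq_zero {m : Type*} (X : Matrix m n 𝕜)
    {u v : n → 𝕜} (h : ∀ i, u i = 0 ∨ v i = 0) : X * diagonal u * (X * diagonal v)ᴴ = 0 := by
  rw [conjTranspose_mul, diagonal_conjTranspose, Matrix.mul_assoc,
    ← Matrix.mul_assoc (diagonal u), diagonal_mul_diagonal]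
  have huv : (fun i => u i * star v i) = 0 := funext fun i => by rcases h i with h | h <;> simp [h]
  rw [huv, diagonal_zero', Matrix.zero_mul, Matrix.mul_zero]

theorem PosSemidef.sqrt_mul_eq_zero {A B : Matrix n n 𝕜} (hA : A.PosSemidef) (h : A * B = 0) :
    CFC.sqrt A * B = 0 := by
  -- `(√A B)ᴴ (√A B) = Bᴴ A B`
  rw [← conjTranspose_mul_self_eq_zero, conjTranspose_mul,
    (CFC.sqrt_nonneg A).posSemidef.1.eq, mul_assoc, ← mul_assoc (CFC.sqrt A),
    CFC.sqrt_mul_sqrt_self A hA.nonneg, h, mul_zero]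

theorem PosSemidef.mul_sqrt_eq_zero {A B : Matrix n n 𝕜} (hB : B.PosSemidef) (h : A * B = 0)
    (hA : A.IsHermitian) : A * CFC.sqrt B = 0 := by
  have hBA : B * A = 0 := by rw [← hA.eq, ← hB.1.eq, ← conjTranspose_mul, h, conjTranspose_zero]
  rw [← conjTranspose_eq_zero, conjTranspose_mul, (CFC.sqrt_nonneg B).posSemidef.1.eq, hA.eq,
    hB.sqrt_mul_eq_zero hBA]

theorem PosSemidef.sqrt_mul_sqrt_eq_zero {A B : Matrix n n 𝕜} (hA : A.PosSemidef)
    (hB : B.PosSemidef) (h : A * B = 0) : CFC.sqrt A * CFC.sqrt B = 0 :=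
  hB.mul_sqrt_eq_zero (hA.sqrt_mul_eq_zero h) (CFC.sqrt_nonneg A).posSemidef.1

theorem sqrt_sum_of_pairwise_mul_eq_zero {ι : Type*} [Fintype ι] {A : ι → Matrix n n 𝕜}
    (hA : ∀ i, (A i).PosSemidef) (h : Pairwise fun i j => A i * A j = 0) :
    CFC.sqrt (∑ i, A i) = ∑ i, CFC.sqrt (A i) := by
  refine CFC.sqrt_unique ?_ (Finset.sum_nonneg fun i _ => CFC.sqrt_nonneg (A i))
  rw [Finset.sum_mul_sum]
  refine Finset.sum_congr rfl fun i _ => ?_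
  rw [Finset.sum_eq_single i (fun j _ hji => (hA i).sqrt_mul_sqrt_eq_zero (hA j) (h hji.symm))
    (by simp), CFC.sqrt_mul_sqrt_self _ (hA i).nonneg]

end Matrix

section
variable {ι κ R : Type*} [Fintype κ] [DecidableEq κ] [CommSemiring R]

theorem sum_ite_mul_ite (w : ι → R) (c : ι → κ) (i j : ι) :
    ∑ k, (if c i = k then w i else 0) * (if c j = k then w j else 0) =
      if c i = c j then w i * w j else 0 := by
  simp [ite_mul, mul_ite, eq_comm]

end

namespace Matrix
variable {m ι κ : Type*} [Fintype m] [Fintype ι] [DecidableEq ι] [Fintype κ] [DecidableEq κ]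

theorem conjTranspose_mul_self_mul_diagonal_apply (X : Matrix m ι ℝ) (u : ι → ℝ) (i j : ι) :
    ((X * diagonal u)ᴴ * (X * diagonal u)) i j = u i * u j * ∑ l, X l i * X l j := by
  rw [mul_apply, Finset.mul_sum]
  simp only [conjTranspose_apply, mul_diagonal, star_trivial]
  exact Finset.sum_congr rfl fun l _ => by ring

theorem conjTranspose_mul_self_mul_diagonal_eq_sum (X : Matrix m ι ℝ) (w : ι → ℝ) (c : ι → κ)
    (horth : ∀ i j, w i ≠ 0 → w j ≠ 0 → c i ≠ c j → ∑ l, X l i * X l j = 0) :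
    (X * diagonal w)ᴴ * (X * diagonal w) =
      ∑ k, (X * diagonal fun i => if c i = k then w i else 0)ᴴ *
        (X * diagonal fun i => if c i = k then w i else 0) := by
  ext i j
  simp only [sum_apply, conjTranspose_mul_self_mul_diagonal_apply, ← Finset.sum_mul,
    sum_ite_mul_ite]
  split_ifs with hc
  · rfl
  · by_cases hwi : w i = 0
    · simp [hwi]
    by_cases hwj : w j = 0
    · simp [hwj]
    simp [horth i j hwi hwj hc]

end Matrix

theorem trace_lasso_decomposes_over_components {n p m : ℕ}
    (X : Matrix (Fin n) (Fin p) ℝ) (w : Fin p → ℝ) (c : Fin p → Fin m)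
    (horth : ∀ i j : Fin p, w i ≠ 0 → w j ≠ 0 → c i ≠ c j → ∑ l, X l i * X l j = 0) :
    traceNorm (X * Matrix.diagonal w) =
      ∑ k : Fin m,
        traceNorm (X * Matrix.diagonal fun i => if c i = k then w i else 0) := by
  have hdisjoint : Pairwise fun k l : Fin m => ∀ i,
      (if c i = k then w i else 0) = 0 ∨ (if c i = l then w i else 0) = 0 := by
    intro k l hkl i
    by_cases hk : c i = k <;> simp [hk, hkl]
  simp only [traceNorm_eq_trace_sqrt]
  rw [conjTranspose_mul_self_mul_diagonal_eq_sum X w c horth,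
    sqrt_sum_of_pairwise_mul_eq_zero (fun k => posSemidef_conjTranspose_mul_self _)
      fun k l hkl => conjTranspose_mul_self_mul_conjTranspose_mul_self_eq_zero
        (mul_diagonal_mul_conjTranspose_mul_diagonal_eq_zero X (hdisjoint hkl)),
    trace_sum]
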